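/- arXiv:1701.05841 — 4 statements merged into one kernel-verified Lean document; each statement's English description precedes it below -/
import Mathlib

section
/- Let K be a field of characteristic zero, let Δ be a set of derivations K → K closed under K-linear combinations, and define cl(C) = ⋂{ker ∂ : ∂ ∈ Δ, ∂ vanishes on C} for C ⊆ K. Then cl satisfies the exchange principle: if a ∈ cl(C ∪ {b}) and a ∉ cl(C), then b ∈ cl(C ∪ {a}). -/
/-- A derivation from a field `K` to itself: additive and Leibniz. -/
def IsDerivation {K : Type*} [Field K] (d : K → K) : Prop :=
  (∀ a b : K, d (a + b) = d a + d b) ∧ (∀ a b : K, d (a * b) = a * d b + b * d a)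

/-- The closure operator given by common kernels of derivations in `Δ` vanishing on `C`. -/
def derCl {K : Type*} [Field K] (Δ : Set (K → K)) (C : Set K) : Set K :=
  {a : K | ∀ d ∈ Δ, (∀ c ∈ C, d c = 0) → d a = 0}

/-!
Take `d₀ ∈ Δ` vanishing on `C` with `d₀ a ≠ 0`. If some `d ∈ Δ` vanished on `C ∪ {a}` with
`d b ≠ 0`, then `d₀ - (d₀ b / d b) • d` would vanish on `C ∪ {b}`, hence at `a`; but its value
at `a` is `d₀ a`.
-/

section

variable {K : Type*} [Field K]

theorem notMem_derCl_iff {Δ : Set (K → K)} {C : Set K} {a : K} :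
    a ∉ derCl Δ C ↔ ∃ d ∈ Δ, (∀ c ∈ C, d c = 0) ∧ d a ≠ 0 := by
  simp [derCl]

theorem eliminate_vanishes_on_insert {d₀ d : K → K} {S : Set K} {b : K}
    (hd₀ : ∀ c ∈ S, d₀ c = 0) (hd : ∀ c ∈ S, d c = 0) (hb : d b ≠ 0) :
    ∀ c ∈ S ∪ {b}, 1 * d₀ c + -(d₀ b / d b) * d c = 0 := by
  rintro c (hc | rfl)
  · simp [hd₀ c hc, hd c hc]
  · field_simp
    ring

end

theorem stmt1_general {K : Type*} [Field K] (Δ : Set (K → K))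
    (hlin : ∀ d₁ ∈ Δ, ∀ d₂ ∈ Δ, ∀ c₁ c₂ : K,
      (fun t => c₁ * d₁ t + c₂ * d₂ t) ∈ Δ)
    (C : Set K) (a b : K)
    (ha : a ∈ derCl Δ (C ∪ {b})) (ha' : a ∉ derCl Δ C) :
    b ∈ derCl Δ (C ∪ {a}) := by
  obtain ⟨d₀, hd₀Δ, hd₀C, hd₀a⟩ := notMem_derCl_iff.1 ha'
  intro d hdΔ hdCa
  by_contra hdb
  have hda : d a = 0 := hdCa a (Or.inr rfl)
  have hdC : ∀ c ∈ C, d c = 0 := fun c hc => hdCa c (Or.inl hc)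
  have hea := ha _ (hlin d₀ hd₀Δ d hdΔ 1 (-(d₀ b / d b)))
    (eliminate_vanishes_on_insert hd₀C hdC hdb)
  simp only [hda, mul_zero, add_zero, one_mul] at hea
  exact hd₀a hea

theorem stmt1 {K : Type*} [Field K] [CharZero K] (Δ : Set (K → K))
    (hΔ : ∀ d ∈ Δ, IsDerivation d)
    (hlin : ∀ d₁ ∈ Δ, ∀ d₂ ∈ Δ, ∀ c₁ c₂ : K,
      (fun t => c₁ * d₁ t + c₂ * d₂ t) ∈ Δ)
    (C : Set K) (a b : K)
    (ha : a ∈ derCl Δ (C ∪ {b})) (ha' : a ∉ derCl Δ C) :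
    b ∈ derCl Δ (C ∪ {a}) :=
  stmt1_general Δ hlin C a b ha ha'
end

section
/- Let K be a field of characteristic zero with subfields E ⊆ L, and suppose x̄ = (x₁,…,xₙ) is a tuple from K algebraically independent over L. Let ℓ₁, ℓ₂ ∈ L \ E and let g ∈ GL₂(E(x̄)) be a non-scalar matrix with entries in E[x̄] such that ℓ₁ = g·ℓ₂ (Möbius action). Then there exists a non-scalar matrix h ∈ GL₂(E) such that ℓ₁ = h·ℓ₂. -/
/-!
Write the entries of `g` as polynomials `Q i j` in `x̄` with coefficients in `E`. Clearing the
denominator, `ℓ₁ (Q₁₀ ℓ₂ + Q₁₁) - (Q₀₀ ℓ₂ + Q₀₁)` is a polynomial over `L` vanishing at `x̄`, hence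
zero by algebraic independence; so for every monomial `m` the matrix `h` of `m`-th coefficients
satisfies the same relation, now with entries in `E`. Since `g` is not scalar, some `h` is not
scalar, and because `ℓ₁, ℓ₂ ∉ E` such an `h` is invertible with nonzero denominator at `ℓ₂`.
-/

/-- A `2 × 2` matrix is scalar if it is a scalar multiple of the identity. -/
def IsScalarMatrix {K : Type*} [Field K] (g : Matrix (Fin 2) (Fin 2) K) : Prop :=
  ∃ c : K, g = c • (1 : Matrix (Fin 2) (Fin 2) K)

open MvPolynomial

theorem isScalarMatrix_iff {K : Type*} [Field K] (g : Matrix (Fin 2) (Fin 2) K) :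
    IsScalarMatrix g ↔ g 0 1 = 0 ∧ g 1 0 = 0 ∧ g 0 0 = g 1 1 := by
  constructor
  · rintro ⟨c, rfl⟩
    simp
  · rintro ⟨h01, h10, h00⟩
    refine ⟨g 1 1, Matrix.ext fun i j => ?_⟩
    fin_cases i <;> fin_cases j <;> simp [h01, h10, h00]

def mobiusDefect {R : Type*} [CommRing R] (h : Matrix (Fin 2) (Fin 2) R) (a b : R) : R :=
  a * (h 1 0 * b + h 1 1) - (h 0 0 * b + h 0 1)

theorem map_mobiusDefect {R S : Type*} [CommRing R] [CommRing S] (f : R →+* S)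
    (h : Matrix (Fin 2) (Fin 2) R) (a b : R) :
    f (mobiusDefect h a b) = mobiusDefect (h.map f) (f a) (f b) := by
  simp [mobiusDefect]

theorem coeff_mobiusDefect_C {R σ : Type*} [CommRing R]
    (Q : Matrix (Fin 2) (Fin 2) (MvPolynomial σ R)) (a b : R) (m : σ →₀ ℕ) :
    (mobiusDefect Q (C a) (C b)).coeff m = mobiusDefect (Q.map (coeff m)) a b := by
  simp only [mobiusDefect, Matrix.map_apply, coeff_sub, coeff_add, coeff_C_mul, mul_comm _ (C b)]
  ring

theorem mobiusDefect_eq_zero_iff {K : Type*} [Field K] {h : Matrix (Fin 2) (Fin 2) K} {a b : K}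
    (hden : h 1 0 * b + h 1 1 ≠ 0) :
    mobiusDefect h a b = 0 ↔ a = (h 0 0 * b + h 0 1) / (h 1 0 * b + h 1 1) := by
  rw [mobiusDefect, sub_eq_zero, eq_div_iff hden]

theorem exists_coeff_not_isScalar {R σ : Type*} [CommRing R]
    {Q : Matrix (Fin 2) (Fin 2) (MvPolynomial σ R)}
    (hQ : ¬ (Q 0 1 = 0 ∧ Q 1 0 = 0 ∧ Q 0 0 = Q 1 1)) :
    ∃ m, ¬ ((Q 0 1).coeff m = 0 ∧ (Q 1 0).coeff m = 0 ∧ (Q 0 0).coeff m = (Q 1 1).coeff m) := by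
  by_contra! hc
  exact hQ ⟨ext _ _ fun m => (hc m).1, ext _ _ fun m => (hc m).2.1,
    ext _ _ fun m => (hc m).2.2⟩

theorem exists_matrix_aeval_of_mem_closure {K σ : Type*} [Field K] {E : Subfield K} {x : σ → K}
    {g : Matrix (Fin 2) (Fin 2) K} (hg : ∀ i j, g i j ∈ Subring.closure (↑E ∪ Set.range x)) :
    ∃ Q : Matrix (Fin 2) (Fin 2) (MvPolynomial σ E), g = Q.map (aeval x) := by
  have hclosure : Subring.closure (↑E ∪ Set.range x) =
      (aeval x : MvPolynomial σ E →ₐ[E] K).range.toSubring := by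
    rw [← Algebra.adjoin_range_eq_range_aeval, Algebra.adjoin_eq_ring_closure]
    congr
    exact (Subtype.range_coe).symm
  have hg' : ∀ i j, ∃ p : MvPolynomial σ E, aeval x p = g i j := by
    intro i j
    simpa [hclosure] using hg i j
  choose P hP using hg'
  exact ⟨Matrix.of P, Matrix.ext fun i j => (hP i j).symm⟩

theorem AlgebraicIndependent.mobiusDefect_coeff_eq_zero {K σ : Type*} [Field K]
    {E L : Subfield K} (hEL : E ≤ L) {x : σ → K} (hx : AlgebraicIndependent L x)
    {Q : Matrix (Fin 2) (Fin 2) (MvPolynomial σ E)} {ℓ₁ ℓ₂ : K} (hℓ₁ : ℓ₁ ∈ L) (hℓ₂ : ℓ₂ ∈ L)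
    (hQ : mobiusDefect (Q.map (aeval x)) ℓ₁ ℓ₂ = 0) (m : σ →₀ ℕ) :
    mobiusDefect (Q.map fun p => ((p.coeff m : E) : K)) ℓ₁ ℓ₂ = 0 := by
  set Q' := Q.map (MvPolynomial.map (Subfield.inclusion hEL))
  have haeval : Q'.map (aeval x) = Q.map (aeval x) := by
    ext i j
    simp only [Q', Matrix.map_apply, aeval_def, eval₂_map]
    rfl
  have hpoly : mobiusDefect Q' (C ⟨ℓ₁, hℓ₁⟩) (C ⟨ℓ₂, hℓ₂⟩) = 0 := by
    apply hx.eq_zero_of_aeval_eq_zero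
    rw [← AlgHom.coe_toRingHom, map_mobiusDefect, AlgHom.coe_toRingHom, haeval, aeval_C, aeval_C]
    exact hQ
  have := congrArg (fun p => ((p.coeff m : L) : K)) hpoly
  simp only [coeff_mobiusDefect_C, coeff_zero] at this
  rw [← L.coe_subtype, map_mobiusDefect] at this
  simp only [Q', Matrix.map_map, Function.comp_def, coeff_map] at this
  exact this

theorem Subfield.eq_zero_of_mul_add_eq_zero {K : Type*} [Field K] {E : Subfield K} {a b ℓ : K}
    (ha : a ∈ E) (hb : b ∈ E) (hℓ : ℓ ∉ E) (h : a * ℓ + b = 0) : a = 0 ∧ b = 0 := by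
  have ha0 : a = 0 := by
    by_contra ha0
    have hℓeq : ℓ = -b / a := by
      rw [eq_div_iff ha0]
      linear_combination h
    exact hℓ (hℓeq ▸ E.div_mem (E.neg_mem hb) ha)
  exact ⟨ha0, by simpa [ha0] using h⟩

section Mobius

variable {K : Type*} [Field K] {E : Subfield K} {h : Matrix (Fin 2) (Fin 2) K} {ℓ₁ ℓ₂ : K}

theorem denom_ne_zero_of_mobiusDefect_eq_zero (hE : ∀ i j, h i j ∈ E) (hℓ₂ : ℓ₂ ∉ E)
    (hns : ¬ (h 0 1 = 0 ∧ h 1 0 = 0 ∧ h 0 0 = h 1 1)) (hrel : mobiusDefect h ℓ₁ ℓ₂ = 0) :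
    h 1 0 * ℓ₂ + h 1 1 ≠ 0 := by
  intro hden
  obtain ⟨h10, h11⟩ := Subfield.eq_zero_of_mul_add_eq_zero (hE 1 0) (hE 1 1) hℓ₂ hden
  have hnum : h 0 0 * ℓ₂ + h 0 1 = 0 := by
    unfold mobiusDefect at hrel
    linear_combination ℓ₁ * hden - hrel
  obtain ⟨h00, h01⟩ := Subfield.eq_zero_of_mul_add_eq_zero (hE 0 0) (hE 0 1) hℓ₂ hnum
  exact hns ⟨h01, h10, h00.trans h11.symm⟩

/-- A singular matrix sends every point where it is defined to the constant `h 0 0 / h 1 0`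
(or `h 0 1 / h 1 1`), which lies in `E`. -/
theorem det_ne_zero_of_mobiusDefect_eq_zero (hE : ∀ i j, h i j ∈ E) (hℓ₁ : ℓ₁ ∉ E)
    (hden : h 1 0 * ℓ₂ + h 1 1 ≠ 0) (hrel : mobiusDefect h ℓ₁ ℓ₂ = 0) : h.det ≠ 0 := by
  intro hdet
  rw [Matrix.det_fin_two] at hdet
  have h10 : (ℓ₁ * h 1 0 - h 0 0) * (h 1 0 * ℓ₂ + h 1 1) = 0 := by
    unfold mobiusDefect at hrel
    linear_combination h 1 0 * hrel - hdet
  have h11 : (ℓ₁ * h 1 1 - h 0 1) * (h 1 0 * ℓ₂ + h 1 1) = 0 := by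
    unfold mobiusDefect at hrel
    linear_combination h 1 1 * hrel + ℓ₂ * hdet
  rw [mul_eq_zero, or_iff_left hden, sub_eq_zero] at h10 h11
  apply hℓ₁
  by_cases h10' : h 1 0 = 0
  · have h11' : h 1 1 ≠ 0 := by simpa [h10'] using hden
    rw [← mul_div_cancel_right₀ ℓ₁ h11', h11]
    exact E.div_mem (hE 0 1) (hE 1 1)
  · rw [← mul_div_cancel_right₀ ℓ₁ h10', h10]
    exact E.div_mem (hE 0 0) (hE 1 0)

end Mobius

theorem stmt8_general {K : Type*} [Field K] (E L : Subfield K) (hEL : E ≤ L)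
    {n : ℕ} (x : Fin n → K) (hx : AlgebraicIndependent L x)
    (ℓ₁ ℓ₂ : K) (hℓ₁ : ℓ₁ ∈ L) (hℓ₂ : ℓ₂ ∈ L) (hℓ₁E : ℓ₁ ∉ E) (hℓ₂E : ℓ₂ ∉ E)
    (g : Matrix (Fin 2) (Fin 2) K)
    (hgE : ∀ i j, g i j ∈ Subring.closure (↑E ∪ Set.range x))
    (hgns : ¬ IsScalarMatrix g)
    (hden : g 1 0 * ℓ₂ + g 1 1 ≠ 0)
    (hact : ℓ₁ = (g 0 0 * ℓ₂ + g 0 1) / (g 1 0 * ℓ₂ + g 1 1)) :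
    ∃ h : Matrix (Fin 2) (Fin 2) K, (∀ i j, h i j ∈ E) ∧ h.det ≠ 0 ∧
      ¬ IsScalarMatrix h ∧ h 1 0 * ℓ₂ + h 1 1 ≠ 0 ∧
      ℓ₁ = (h 0 0 * ℓ₂ + h 0 1) / (h 1 0 * ℓ₂ + h 1 1) := by
  obtain ⟨Q, rfl⟩ := exists_matrix_aeval_of_mem_closure hgE
  have hQns : ¬ (Q 0 1 = 0 ∧ Q 1 0 = 0 ∧ Q 0 0 = Q 1 1) := fun hQ =>
    hgns ((isScalarMatrix_iff _).2 (by simp [hQ]))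
  obtain ⟨m, hm⟩ := exists_coeff_not_isScalar hQns
  set h := Q.map fun p => ((p.coeff m : E) : K)
  have hE : ∀ i j, h i j ∈ E := fun i j => Subtype.property _
  have hns : ¬ (h 0 1 = 0 ∧ h 1 0 = 0 ∧ h 0 0 = h 1 1) := by
    simpa [h] using hm
  have hrel : mobiusDefect h ℓ₁ ℓ₂ = 0 :=
    hx.mobiusDefect_coeff_eq_zero hEL hℓ₁ hℓ₂ ((mobiusDefect_eq_zero_iff hden).2 hact) m
  have hden' := denom_ne_zero_of_mobiusDefect_eq_zero hE hℓ₂E hns hrel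
  exact ⟨h, hE, det_ne_zero_of_mobiusDefect_eq_zero hE hℓ₁E hden' hrel,
    fun hs => hns ((isScalarMatrix_iff h).1 hs), hden', (mobiusDefect_eq_zero_iff hden').1 hrel⟩

theorem stmt8 {K : Type*} [Field K] [CharZero K] (E L : Subfield K) (hEL : E ≤ L)
    {n : ℕ} (x : Fin n → K) (hx : AlgebraicIndependent L x)
    (ℓ₁ ℓ₂ : K) (hℓ₁ : ℓ₁ ∈ L) (hℓ₂ : ℓ₂ ∈ L) (hℓ₁E : ℓ₁ ∉ E) (hℓ₂E : ℓ₂ ∉ E)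
    (g : Matrix (Fin 2) (Fin 2) K)
    (hgE : ∀ i j, g i j ∈ Subring.closure (↑E ∪ Set.range x))
    (hgdet : g.det ≠ 0) (hgns : ¬ IsScalarMatrix g)
    (hden : g 1 0 * ℓ₂ + g 1 1 ≠ 0)
    (hact : ℓ₁ = (g 0 0 * ℓ₂ + g 0 1) / (g 1 0 * ℓ₂ + g 1 1)) :
    ∃ h : Matrix (Fin 2) (Fin 2) K, (∀ i j, h i j ∈ E) ∧ h.det ≠ 0 ∧
      ¬ IsScalarMatrix h ∧ h 1 0 * ℓ₂ + h 1 1 ≠ 0 ∧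
      ℓ₁ = (h 0 0 * ℓ₂ + h 0 1) / (h 1 0 * ℓ₂ + h 1 1) :=
  stmt8_general E L hEL x hx ℓ₁ ℓ₂ hℓ₁ hℓ₂ hℓ₁E hℓ₂E g hgE hgns hden hact
end

section
/- Let X be a set with a pregeometry cl, and let dim(A/B) denote dimension relative to cl. Suppose E ⊆ F ⊆ X give rise to two pregeometries cl_E, cl_F with dimensions dim_E, dim_F, such that dim_F(ℓ̄) = dim_E(ℓ̄) for every finite tuple ℓ̄ from a set L (i.e. F is disjoint from L over E). Then for any finite tuple x̄ from X and any A ⊆ L: dim_F(x̄/L) − dim_E(x̄/L) ≤ dim_F(x̄/A) − dim_E(x̄/A). -/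
/-!
Over a base `B ⊆ L`, the two dimensions already agree on tuples `t` from `L`: by finite character
`B` may be replaced by a finite `b ⊆ L`, and then `dim(t/b) = dim(t ∪ b) − dim(b)` is the same
for `E` and `F`. For the theorem, choose a finite `t ⊆ L` over which both `dim(x̄/L)` are attained
and expand `dim(x̄ t/A)` in two ways:
`dim(x̄/L) + dim(t/A) = dim(t/A x̄) + dim(x̄/A)`.
Here `dim(t/A)` is the same for `E` and `F`, while `dim_F(t/A x̄) ≤ dim_E(t/A x̄)`.
-/

section

variable {X : Type*}

def AdditionFormula [DecidableEq X] (d : Finset X → Set X → ℕ) : Prop :=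
  ∀ s t : Finset X, ∀ A : Set X, d (s ∪ t) A = d s (A ∪ ↑t) + d t A

def FiniteCharacter (d : Finset X → Set X → ℕ) : Prop :=
  ∀ s : Finset X, ∀ A : Set X, ∃ t : Finset X, ↑t ⊆ A ∧
    ∀ B : Set X, ↑t ⊆ B → B ⊆ A → d s B = d s A

def GeodesicallyDisjoint (dE dF : Finset X → Set X → ℕ) (L : Set X) : Prop :=
  ∀ t : Finset X, ↑t ⊆ L → dF t ∅ = dE t ∅

theorem AdditionFormula.dim_add_dim_comm [DecidableEq X] {d : Finset X → Set X → ℕ}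
    (hd : AdditionFormula d) (s t : Finset X) (A : Set X) :
    d s (A ∪ ↑t) + d t A = d t (A ∪ ↑s) + d s A := by
  rw [← hd, ← hd, Finset.union_comm]

theorem FiniteCharacter.exists_finset_forall_eq₂ [DecidableEq X] {d d' : Finset X → Set X → ℕ}
    (hd : FiniteCharacter d) (hd' : FiniteCharacter d') (s : Finset X) (A : Set X) :
    ∃ t : Finset X, ↑t ⊆ A ∧
      ∀ B : Set X, ↑t ⊆ B → B ⊆ A → d s B = d s A ∧ d' s B = d' s A := by
  obtain ⟨t, htA, ht⟩ := hd s A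
  obtain ⟨t', ht'A, ht'⟩ := hd' s A
  refine ⟨t ∪ t', by simpa using ⟨htA, ht'A⟩, fun B hB hBA => ?_⟩
  rw [Finset.coe_union, Set.union_subset_iff] at hB
  exact ⟨ht B hB.1 hBA, ht' B hB.2 hBA⟩

namespace GeodesicallyDisjoint

variable [DecidableEq X] {dE dF : Finset X → Set X → ℕ} {L : Set X}

theorem dim_finset_eq (hE : AdditionFormula dE) (hF : AdditionFormula dF)
    (hdisj : GeodesicallyDisjoint dE dF L) {t b : Finset X} (ht : ↑t ⊆ L) (hb : ↑b ⊆ L) :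
    dF t ↑b = dE t ↑b := by
  have hEtb := hE t b ∅
  have hFtb := hF t b ∅
  rw [Set.empty_union] at hEtb hFtb
  have hdisj_tb := hdisj (t ∪ b) (by simpa using ⟨ht, hb⟩)
  have hdisj_b := hdisj b hb
  omega

theorem dim_eq (hE : AdditionFormula dE) (hF : AdditionFormula dF)
    (hfinE : FiniteCharacter dE) (hfinF : FiniteCharacter dF)
    (hdisj : GeodesicallyDisjoint dE dF L) {t : Finset X} (ht : ↑t ⊆ L) {B : Set X}
    (hB : B ⊆ L) : dF t B = dE t B := by
  obtain ⟨b, hbB, hb⟩ := hfinE.exists_finset_forall_eq₂ hfinF t B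
  obtain ⟨hEb, hFb⟩ := hb b subset_rfl hbB
  rw [← hEb, ← hFb]
  exact hdisj.dim_finset_eq hE hF ht (hbB.trans hB)

end GeodesicallyDisjoint

end

theorem stmt10_general {X : Type*} [DecidableEq X] (L : Set X) (dimE dimF : Finset X → Set X → ℕ)
    -- addition formula for both dimensions
    (haddE : ∀ s t : Finset X, ∀ A : Set X,
      dimE (s ∪ t) A = dimE s (A ∪ ↑t) + dimE t A)
    (haddF : ∀ s t : Finset X, ∀ A : Set X,
      dimF (s ∪ t) A = dimF s (A ∪ ↑t) + dimF t A)
    -- finite character: the dimension over a set is attained over a finite subset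
    (hfinE : ∀ s : Finset X, ∀ A : Set X, ∃ t : Finset X, ↑t ⊆ A ∧
      ∀ B : Set X, ↑t ⊆ B → B ⊆ A → dimE s B = dimE s A)
    (hfinF : ∀ s : Finset X, ∀ A : Set X, ∃ t : Finset X, ↑t ⊆ A ∧
      ∀ B : Set X, ↑t ⊆ B → B ⊆ A → dimF s B = dimF s A)
    -- `cl_E ⊆ cl_F`, so `dim_F ≤ dim_E`
    (hFE : ∀ s : Finset X, ∀ A : Set X, dimF s A ≤ dimE s A)
    -- geodesical disjointness: the two dimensions agree on tuples from `L`
    (hdisj : ∀ t : Finset X, ↑t ⊆ L → dimF t ∅ = dimE t ∅)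
    (s : Finset X) (A : Set X) (hA : A ⊆ L) :
    dimF s L + dimE s A ≤ dimE s L + dimF s A := by
  obtain ⟨t, htL, ht⟩ := FiniteCharacter.exists_finset_forall_eq₂ hfinE hfinF s L
  obtain ⟨hEL, hFL⟩ := ht (A ∪ ↑t) Set.subset_union_right (Set.union_subset hA htL)
  have hE := AdditionFormula.dim_add_dim_comm haddE s t A
  have hF := AdditionFormula.dim_add_dim_comm haddF s t A
  have htA : dimF t A = dimE t A :=
    GeodesicallyDisjoint.dim_eq haddE haddF hfinE hfinF hdisj htL hA
  have htAs := hFE t (A ∪ ↑s)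
  omega

/-- if the relative dimension functions of two pregeometries
`cl_E ≤ cl_F` (given via dimension functions on finite tuples over arbitrary
base sets, satisfying the addition formula, antitonicity in the base, and
finite character) agree on all finite tuples from a set `L`, then
`dim_F(x̄/L) − dim_E(x̄/L) ≤ dim_F(x̄/A) − dim_E(x̄/A)` for every `A ⊆ L`
(stated additively to avoid truncated subtraction). -/
theorem stmt10 {X : Type*} [DecidableEq X] (L : Set X) (dimE dimF : Finset X → Set X → ℕ)
    -- addition formula for both dimensions
    (haddE : ∀ s t : Finset X, ∀ A : Set X,
      dimE (s ∪ t) A = dimE s (A ∪ ↑t) + dimE t A)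
    (haddF : ∀ s t : Finset X, ∀ A : Set X,
      dimF (s ∪ t) A = dimF s (A ∪ ↑t) + dimF t A)
    -- dimension is antitone in the base set
    (hmonoE : ∀ s : Finset X, ∀ A B : Set X, A ⊆ B → dimE s B ≤ dimE s A)
    (hmonoF : ∀ s : Finset X, ∀ A B : Set X, A ⊆ B → dimF s B ≤ dimF s A)
    -- finite character: the dimension over a set is attained over a finite subset
    (hfinE : ∀ s : Finset X, ∀ A : Set X, ∃ t : Finset X, ↑t ⊆ A ∧
      ∀ B : Set X, ↑t ⊆ B → B ⊆ A → dimE s B = dimE s A)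
    (hfinF : ∀ s : Finset X, ∀ A : Set X, ∃ t : Finset X, ↑t ⊆ A ∧
      ∀ B : Set X, ↑t ⊆ B → B ⊆ A → dimF s B = dimF s A)
    -- `cl_E ⊆ cl_F`, so `dim_F ≤ dim_E`
    (hFE : ∀ s : Finset X, ∀ A : Set X, dimF s A ≤ dimE s A)
    -- geodesical disjointness: the two dimensions agree on tuples from `L`
    (hdisj : ∀ t : Finset X, ↑t ⊆ L → dimF t ∅ = dimE t ∅)
    (s : Finset X) (A : Set X) (hA : A ⊆ L) :
    dimF s L + dimE s A ≤ dimE s L + dimF s A :=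
  stmt10_general L dimE dimF haddE haddF hfinE hfinF hFE hdisj s A hA
end

section
/- Let (K, D, j, j′, j″, j‴) be a j-field, C ⊆ K, and suppose t₁,…,tₙ ∈ K admit j-derivations ∂₁,…,∂ₙ : K → K vanishing on C with ∂ᵢ(tₖ) = δᵢₖ. Then the images d_j(t₁),…,d_j(tₙ) in the universal j-derivation module Ξ(K/C) are K-linearly independent; consequently the jcl-dimension of K over C is at most dim_K Ξ(K/C). -/
noncomputable section

variable {K : Type*} [Field K]

/-- The generator `dr` in the free `K`-module on the symbols `r ∈ K`. -/
def fgen (r : K) : K →₀ K := Finsupp.single r 1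

/-- The relations defining the universal module of `j`-derivations on `K`
vanishing on `C`. -/
def jRels (D : Set K) (j j' j'' j''' : K → K) (C : Set K) : Set (K →₀ K) :=
  {v | (∃ a b : K, v = fgen (a + b) - fgen a - fgen b) ∨
       (∃ a b : K, v = fgen (a * b) - a • fgen b - b • fgen a) ∨
       (∃ z ∈ D, v = fgen (j z) - j' z • fgen z) ∨
       (∃ z ∈ D, v = fgen (j' z) - j'' z • fgen z) ∨
       (∃ z ∈ D, v = fgen (j'' z) - j''' z • fgen z) ∨
       (∃ c ∈ C, v = fgen c)}

/-- The universal module `Ξ(K/C)` for `j`-derivations vanishing on `C`. -/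
def Xi (D : Set K) (j j' j'' j''' : K → K) (C : Set K) :=
  (K →₀ K) ⧸ Submodule.span K (jRels D j j' j'' j''' C)

instance (D : Set K) (j j' j'' j''' : K → K) (C : Set K) :
    AddCommGroup (Xi D j j' j'' j''' C) :=
  Submodule.Quotient.addCommGroup _

instance (D : Set K) (j j' j'' j''' : K → K) (C : Set K) :
    Module K (Xi D j j' j'' j''' C) :=
  Submodule.Quotient.module _

/-- The universal `j`-derivation `d_j : K → Ξ(K/C)`. -/
def djUniv (D : Set K) (j j' j'' j''' : K → K) (C : Set K) (r : K) :
    Xi D j j' j'' j''' C :=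
  Submodule.Quotient.mk (fgen r)

/-- A `j`-derivation from `K` to a `K`-module `M`. -/
def IsJDerivation (D : Set K) (j j' j'' j''' : K → K)
    {M : Type*} [AddCommGroup M] [Module K M] (d : K → M) : Prop :=
  (∀ a b : K, d (a + b) = d a + d b) ∧
  (∀ a b : K, d (a * b) = a • d b + b • d a) ∧
  (∀ z ∈ D, d (j z) = j' z • d z ∧ d (j' z) = j'' z • d z ∧ d (j'' z) = j''' z • d z)

/-! Each `∂ᵢ` is a `j`-derivation vanishing on `C`, so it kills every defining relation of `Ξ(K/C)`
and factors through `d_j` as a linear functional `ψᵢ`. Then `ψᵢ (d_j tₖ) = ∂ᵢ tₖ = δᵢₖ`, and a family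
admitting such a biorthogonal system of functionals is linearly independent. -/

theorem LinearIndependent.of_biorthogonal {R V ι : Type*} [Semiring R] [AddCommMonoid V]
    [Module R V] [DecidableEq ι] {v : ι → V} (ψ : ι → V →ₗ[R] R)
    (hψ : ∀ i k, ψ i (v k) = if i = k then 1 else 0) : LinearIndependent R v := by
  have hcomp : LinearMap.pi ψ ∘ v = fun k => Pi.single k 1 := by
    ext k i
    simp [hψ, Pi.single_apply]
  exact .of_comp (LinearMap.pi ψ) (hcomp ▸ Pi.linearIndependent_single_one ι R)

section

variable {D : Set K} {j j' j'' j''' : K → K} {C : Set K}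
  {M : Type*} [AddCommGroup M] [Module K M] {d : K → M}

theorem linearCombination_fgen (d : K → M) (r : K) :
    Finsupp.linearCombination K d (fgen r) = d r := by
  simp [fgen]

theorem IsJDerivation.span_jRels_le_ker (hd : IsJDerivation D j j' j'' j''' d)
    (hdC : ∀ c ∈ C, d c = 0) :
    Submodule.span K (jRels D j j' j'' j''' C) ≤ LinearMap.ker (Finsupp.linearCombination K d) := by
  obtain ⟨hadd, hmul, hD⟩ := hd
  rw [Submodule.span_le]
  rintro v (⟨a, b, rfl⟩ | ⟨a, b, rfl⟩ | ⟨z, hz, rfl⟩ | ⟨z, hz, rfl⟩ | ⟨z, hz, rfl⟩ | ⟨c, hc, rfl⟩)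
  · simp [linearCombination_fgen, hadd]
  · simp [linearCombination_fgen, hmul]
  · simp [linearCombination_fgen, (hD z hz).1]
  · simp [linearCombination_fgen, (hD z hz).2.1]
  · simp [linearCombination_fgen, (hD z hz).2.2]
  · simp [linearCombination_fgen, hdC c hc]

def IsJDerivation.liftXi (hd : IsJDerivation D j j' j'' j''' d) (hdC : ∀ c ∈ C, d c = 0) :
    Xi D j j' j'' j''' C →ₗ[K] M :=
  Submodule.liftQ _ (Finsupp.linearCombination K d) (hd.span_jRels_le_ker hdC)

theorem IsJDerivation.liftXi_djUniv (hd : IsJDerivation D j j' j'' j''' d)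
    (hdC : ∀ c ∈ C, d c = 0) (r : K) : hd.liftXi hdC (djUniv D j j' j'' j''' C r) = d r :=
  linearCombination_fgen d r

end

theorem stmt15_general (D : Set K) (j j' j'' j''' : K → K) (C : Set K)
    {n : ℕ} (t : Fin n → K) (d : Fin n → (K → K))
    (hd : ∀ i, IsJDerivation D j j' j'' j''' (d i))
    (hdC : ∀ i, ∀ c ∈ C, d i c = 0)
    (hdelta : ∀ i k, d i (t k) = if i = k then 1 else 0) :
    LinearIndependent K (fun i : Fin n => djUniv D j j' j'' j''' C (t i)) ∧
    (n : Cardinal) ≤ Module.rank K (Xi D j j' j'' j''' C) := by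
  have hli : LinearIndependent K (fun i : Fin n => djUniv D j j' j'' j''' C (t i)) :=
    .of_biorthogonal (fun i => (hd i).liftXi (hdC i)) fun i k => by
      rw [IsJDerivation.liftXi_djUniv, hdelta]
  exact ⟨hli, by simpa using hli.cardinal_lift_le_rank⟩

theorem stmt15 [CharZero K] (D : Set K) (j j' j'' j''' : K → K) (C : Set K)
    {n : ℕ} (t : Fin n → K) (d : Fin n → (K → K))
    (hd : ∀ i, IsJDerivation D j j' j'' j''' (d i))
    (hdC : ∀ i, ∀ c ∈ C, d i c = 0)
    (hdelta : ∀ i k, d i (t k) = if i = k then 1 else 0) :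
    LinearIndependent K (fun i : Fin n => djUniv D j j' j'' j''' C (t i)) ∧
    (n : Cardinal) ≤ Module.rank K (Xi D j j' j'' j''' C) :=
  stmt15_general D j j' j'' j''' C t d hd hdC hdelta

end
end
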